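/- Let m, k be integers with 1 ≤ k ≤ m, let S be a nonempty subset of {1,...,k}, and let f_{(m,k)} and g_{(m,k)} be the associated functions on 𝔽_3^m. Then for every v ∈ 𝔽_3^m, the real part of the Walsh transform of f_{(m,k)} at v equals the real part of the Walsh transform of g_{(m,k)} at v. -/
import Mathlib

open Finset

/-- `ζ = exp(2πi/3)`, a primitive cube root of unity. -/
noncomputable def zeta3 : ℂ := Complex.exp (2 * Real.pi * Complex.I / 3)

/-- The Walsh transform of `h : 𝔽_3^m → 𝔽_3` at `w ∈ 𝔽_3^m`:
`ĥ(w) = Σ_{x ∈ 𝔽_3^m} ζ^{h(x) - w·x}`. -/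
noncomputable def walsh {m : ℕ} (h : (Fin m → ZMod 3) → ZMod 3)
    (w : Fin m → ZMod 3) : ℂ :=
  ∑ x : Fin m → ZMod 3, zeta3 ^ (h x - ∑ i, w i * x i).val

/-- The function `f_{(m,k)} : 𝔽_3^m → 𝔽_3` attached to a subset `S ⊆ {1,…,k}`:
`-1` if `wt(x) ∈ S`, `1` if `wt(x) ∈ {1,…,k} \ S`, `0` otherwise. -/
def fmk {m : ℕ} (k : ℕ) (S : Finset ℕ) (x : Fin m → ZMod 3) : ZMod 3 :=
  if hammingNorm x ∈ S then -1
  else if hammingNorm x ∈ Finset.Icc 1 k then 1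
  else 0

/-- The function `g_{(m,k)} : 𝔽_3^m → 𝔽_3`: `1` if `1 ≤ wt(x) ≤ k`, `0` otherwise. -/
def gmk {m : ℕ} (k : ℕ) (x : Fin m → ZMod 3) : ZMod 3 :=
  if hammingNorm x ∈ Finset.Icc 1 k then 1 else 0

lemma zeta3_cube : zeta3 ^ 3 = 1 := by
  rw [zeta3, ← Complex.exp_nat_mul]
  rw [show ((3 : ℕ) : ℂ) * (2 * Real.pi * Complex.I / 3) = 2 * Real.pi * Complex.I by
    push_cast; ring]
  exact Complex.exp_two_pi_mul_I

lemma zeta3_ne_zero : zeta3 ≠ 0 := Complex.exp_ne_zero _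

lemma conj_zeta3 : (starRingEnd ℂ) zeta3 = zeta3 ^ 2 := by
  have h1 : (starRingEnd ℂ) zeta3 * zeta3 = 1 := by
    rw [zeta3, ← Complex.exp_conj, ← Complex.exp_add]
    rw [show (starRingEnd ℂ) (2 * Real.pi * Complex.I / 3) + 2 * Real.pi * Complex.I / 3
        = 0 by
      rw [map_div₀, map_mul, map_mul, Complex.conj_I, Complex.conj_ofReal,
        map_ofNat, map_ofNat]
      ring]
    exact Complex.exp_zero
  have h2 : zeta3 ^ 2 * zeta3 = 1 := by rw [← pow_succ]; exact zeta3_cube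
  exact mul_right_cancel₀ zeta3_ne_zero (h1.trans h2.symm)

lemma zeta3_sq_re : (zeta3 ^ 2).re = zeta3.re := by
  rw [← conj_zeta3, Complex.conj_re]

lemma key (t : ZMod 3) :
    (zeta3 ^ ((-1 - t : ZMod 3)).val).re + (zeta3 ^ ((-1 + t : ZMod 3)).val).re
      = (zeta3 ^ ((1 - t : ZMod 3)).val).re + (zeta3 ^ ((1 + t : ZMod 3)).val).re := by
  have ht : t = 0 ∨ t = 1 ∨ t = 2 := by revert t; decide
  rcases ht with rfl | rfl | rfl <;>
    · simp only [show ((-1 : ZMod 3) - 0).val = 2 from rfl, show ((-1 : ZMod 3) + 0).val = 2 from rfl,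
        show ((1 : ZMod 3) - 0).val = 1 from rfl, show ((1 : ZMod 3) + 0).val = 1 from rfl,
        show ((-1 : ZMod 3) - 1).val = 1 from rfl, show ((-1 : ZMod 3) + 1).val = 0 from rfl,
        show ((1 : ZMod 3) - 1).val = 0 from rfl, show ((1 : ZMod 3) + 1).val = 2 from rfl,
        show ((-1 : ZMod 3) - 2).val = 0 from rfl, show ((-1 : ZMod 3) + 2).val = 1 from rfl,
        show ((1 : ZMod 3) - 2).val = 2 from rfl, show ((1 : ZMod 3) + 2).val = 0 from rfl,
        pow_zero, pow_one, zeta3_sq_re]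
      try ring

lemma hammingNorm_neg' {m : ℕ} (x : Fin m → ZMod 3) : hammingNorm (-x) = hammingNorm x := by
  have := hammingNorm_comp (β := fun _ : Fin m => ZMod 3) (fun _ (c : ZMod 3) => -c)
    (fun _ => neg_injective) (fun _ => neg_zero) (x := x)
  simpa [Pi.neg_def] using this

lemma walsh_re_pair {m : ℕ} (h : (Fin m → ZMod 3) → ZMod 3)
    (hneg : ∀ x, h (-x) = h x) (v : Fin m → ZMod 3) :
    2 * (walsh h v).re = ∑ x : Fin m → ZMod 3,
      ((zeta3 ^ (h x - ∑ i, v i * x i).val).re + (zeta3 ^ (h x + ∑ i, v i * x i).val).re) := by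
  have hre : (walsh h v).re = ∑ x : Fin m → ZMod 3, (zeta3 ^ (h x - ∑ i, v i * x i).val).re := by
    rw [walsh, Complex.re_sum]
  have hre2 : (walsh h v).re = ∑ x : Fin m → ZMod 3, (zeta3 ^ (h x + ∑ i, v i * x i).val).re := by
    rw [hre]
    refine Fintype.sum_equiv (Equiv.neg _) _ _ fun x => ?_
    simp only [Equiv.neg_apply, hneg, Pi.neg_apply, mul_neg, Finset.sum_neg_distrib,
      sub_neg_eq_add, ← sub_eq_add_neg]
  rw [Finset.sum_add_distrib, ← hre, ← hre2]; ring

/-- For `1 ≤ k ≤ m` and `∅ ≠ S ⊆ {1,…,k}`, the Walsh transforms of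
`f_{(m,k)}` and `g_{(m,k)}` have the same real part at every `v ∈ 𝔽_3^m`. -/
theorem stmt_8 (m k : ℕ) (hk1 : 1 ≤ k) (hkm : k ≤ m)
    (S : Finset ℕ) (hS : S.Nonempty) (hSsub : S ⊆ Finset.Icc 1 k)
    (v : Fin m → ZMod 3) :
    (walsh (fmk (m := m) k S) v).re = (walsh (gmk (m := m) k) v).re := by
  have hf := walsh_re_pair (fmk (m := m) k S)
    (fun x => by simp [fmk, hammingNorm_neg']) v
  have hg := walsh_re_pair (gmk (m := m) k)
    (fun x => by simp [gmk, hammingNorm_neg']) v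
  have hsum : ∑ x : Fin m → ZMod 3,
      ((zeta3 ^ (fmk k S x - ∑ i, v i * x i).val).re
        + (zeta3 ^ (fmk k S x + ∑ i, v i * x i).val).re)
      = ∑ x : Fin m → ZMod 3,
      ((zeta3 ^ (gmk k x - ∑ i, v i * x i).val).re
        + (zeta3 ^ (gmk k x + ∑ i, v i * x i).val).re) := by
    refine Finset.sum_congr rfl fun x _ => ?_
    by_cases hx : hammingNorm x ∈ S
    · have hIcc : hammingNorm x ∈ Finset.Icc 1 k := hSsub hx
      rw [fmk, gmk, if_pos hx, if_pos hIcc]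
      exact key _
    · rw [show fmk k S x = gmk k x by rw [fmk, gmk, if_neg hx]]
  linarith [hf, hg, hsum ▸ hf]
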